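/- arXiv:2006.03513 — 6 statements merged into one kernel-verified Lean document; each statement's English description precedes it below -/
import Mathlib

section
/- For every real number x with 0 < x ≤ 1 and every real number α > 0, one has ln(e + α/x) ≤ ln(e + α) · (1 − ln x). -/
/-- For every real `x` with `0 < x ≤ 1` and every real `α > 0`,
`ln(e + α/x) ≤ ln(e + α) · (1 − ln x)`. -/
theorem log_add_div_le (x α : ℝ) (hx0 : 0 < x) (hx1 : x ≤ 1) (hα : 0 < α) :
    Real.log (Real.exp 1 + α / x) ≤ Real.log (Real.exp 1 + α) * (1 - Real.log x) := by
  have hex : (0:ℝ) < Real.exp 1 := Real.exp_pos 1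
  have h1 : Real.log (Real.exp 1 + α / x) ≤ Real.log ((Real.exp 1 + α) / x) := by
    apply Real.log_le_log (by positivity)
    rw [add_div]
    gcongr
    exact le_div_self hex.le hx0 hx1
  have h2 : Real.log ((Real.exp 1 + α) / x) = Real.log (Real.exp 1 + α) - Real.log x :=
    Real.log_div (by positivity) (ne_of_gt hx0)
  have h3 : (1:ℝ) ≤ Real.log (Real.exp 1 + α) := by
    calc (1:ℝ) = Real.log (Real.exp 1) := (Real.log_exp 1).symm
    _ ≤ _ := Real.log_le_log hex (by linarith)
  have h4 : Real.log x ≤ 0 := Real.log_nonpos hx0.le hx1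
  nlinarith [h1, h2, h3, h4]
end

section
/- Let K > 0 and let w : [0, T] → ℝ be a continuous function with 0 ≤ w(t) ≤ 1 for all t, satisfying w(t) ≤ K ∫₀ᵗ w(τ)(1 − ln w(τ)) dτ for all t ∈ [0, T] (with the convention that the integrand is 0 where w(τ) = 0). Then w(t) = 0 for all t ∈ [0, T]. -/
open Real Set

private lemma osgood_f_cont : Continuous (fun x : ℝ => x * (1 - Real.log x)) := by
  have h : (fun x : ℝ => x * (1 - Real.log x)) = fun x => x - x * Real.log x := by
    funext x; ring
  rw [h]
  exact continuous_id.sub Real.continuous_mul_log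

private lemma osgood_f_mono : MonotoneOn (fun x : ℝ => x * (1 - Real.log x)) (Set.Icc 0 1) := by
  apply monotoneOn_of_deriv_nonneg (convex_Icc 0 1) osgood_f_cont.continuousOn
  · intro x hx
    rw [interior_Icc] at hx
    have h : HasDerivAt (fun x : ℝ => x * (1 - Real.log x)) (-Real.log x) x := by
      have := (hasDerivAt_id x).mul ((hasDerivAt_const x (1:ℝ)).sub (Real.hasDerivAt_log hx.1.ne'))
      refine this.congr_deriv ?_
      have hxne : x ≠ 0 := hx.1.ne'
      simp only [Pi.sub_apply, id]
      linear_combination -(mul_inv_cancel₀ hxne)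
    exact h.differentiableAt.differentiableWithinAt
  · intro x hx
    rw [interior_Icc] at hx
    have h : HasDerivAt (fun x : ℝ => x * (1 - Real.log x)) (-Real.log x) x := by
      have := (hasDerivAt_id x).mul ((hasDerivAt_const x (1:ℝ)).sub (Real.hasDerivAt_log hx.1.ne'))
      refine this.congr_deriv ?_
      have hxne : x ≠ 0 := hx.1.ne'
      simp only [Pi.sub_apply, id]
      linear_combination -(mul_inv_cancel₀ hxne)
    rw [h.deriv]
    simp only [neg_nonneg]
    exact Real.log_nonpos hx.1.le hx.2.le

private lemma osgood_hasDerivAt (K c t : ℝ) :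
    HasDerivAt (fun τ : ℝ => Real.exp (1 - c * Real.exp (-K * τ)))
      (K * (Real.exp (1 - c * Real.exp (-K * t)) *
        (1 - Real.log (Real.exp (1 - c * Real.exp (-K * t)))))) t := by
  have h1 : HasDerivAt (fun τ : ℝ => -K * τ) (-K) t := by
    simpa using (hasDerivAt_id t).const_mul (-K)
  have h2 : HasDerivAt (fun τ : ℝ => Real.exp (-K * τ)) (Real.exp (-K * t) * (-K)) t := h1.exp
  have h3 : HasDerivAt (fun τ : ℝ => 1 - c * Real.exp (-K * τ))
      (-(c * (Real.exp (-K * t) * (-K)))) t := (h2.const_mul c).const_sub 1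
  have h4 := h3.exp
  convert h4 using 1
  rw [Real.log_exp]
  ring

/-- Osgood-type uniqueness lemma: a continuous `w : [0,T] → [0,1]` satisfying
`w(t) ≤ K ∫₀ᵗ w(τ)(1 − ln w(τ)) dτ` vanishes identically. (Note `Real.log 0 = 0`, so the
integrand is `0` where `w = 0`, matching the stated convention.) -/
theorem osgood_vanishing (K T : ℝ) (w : ℝ → ℝ) (hK : 0 < K)
    (hwc : ContinuousOn w (Set.Icc 0 T))
    (hw0 : ∀ t ∈ Set.Icc (0 : ℝ) T, 0 ≤ w t)
    (hw1 : ∀ t ∈ Set.Icc (0 : ℝ) T, w t ≤ 1)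
    (hineq : ∀ t ∈ Set.Icc (0 : ℝ) T,
      w t ≤ K * ∫ τ in (0 : ℝ)..t, w τ * (1 - Real.log (w τ))) :
    ∀ t ∈ Set.Icc (0 : ℝ) T, w t = 0 := by
  intro t₀ ht₀
  have hT : (0:ℝ) ≤ T := ht₀.1.trans ht₀.2
  have h0mem : (0:ℝ) ∈ Set.Icc (0:ℝ) T := ⟨le_refl 0, hT⟩
  have hw00 : w 0 = 0 := by
    have h := hineq 0 h0mem
    rw [intervalIntegral.integral_same, mul_zero] at h
    exact le_antisymm h (hw0 0 h0mem)
  -- key comparison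
  have key : ∀ c : ℝ, 1 < c → w t₀ < Real.exp (1 - c * Real.exp (-K * t₀)) := by
    intro c hc
    set y : ℝ → ℝ := fun τ => Real.exp (1 - c * Real.exp (-K * τ)) with hy
    have hyc : Continuous y := by
      apply Real.continuous_exp.comp
      exact (continuous_const.sub (continuous_const.mul
        (Real.continuous_exp.comp (continuous_const.mul continuous_id))))
    have hymono : MonotoneOn y (Set.Icc 0 T) := by
      intro a _ b _ hab
      apply Real.exp_le_exp.2
      have : Real.exp (-K * b) ≤ Real.exp (-K * a) := by
        apply Real.exp_le_exp.2
        nlinarith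
      nlinarith [Real.exp_pos (-K * b)]
    by_contra hcon
    push_neg at hcon
    set S : Set ℝ := {t | t ∈ Set.Icc (0:ℝ) T ∧ y t ≤ w t} with hS
    have hSne : t₀ ∈ S := ⟨ht₀, hcon⟩
    have hSbdd : BddBelow S := ⟨0, fun x hx => hx.1.1⟩
    have hSclosed : IsClosed S := by
      have : S = Set.Icc 0 T ∩ (fun t => w t - y t) ⁻¹' (Set.Ici 0) := by
        ext x
        simp only [hS, Set.mem_setOf_eq, Set.mem_inter_iff, Set.mem_preimage, Set.mem_Ici,
          sub_nonneg]
      rw [this]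
      exact (hwc.sub hyc.continuousOn).preimage_isClosed_of_isClosed isClosed_Icc isClosed_Ici
    set s := sInf S with hsdef
    have hsmem : s ∈ S := hSclosed.csInf_mem ⟨t₀, hSne⟩ hSbdd
    have hs0 : (0:ℝ) ≤ s := hsmem.1.1
    have hsT : s ≤ T := hsmem.1.2
    have hspos : 0 < s := by
      rcases hs0.lt_or_eq with h | h
      · exact h
      · exfalso
        have := hsmem.2
        rw [← h, hw00] at this
        exact absurd this (not_le.2 (Real.exp_pos _))
    have hlt : ∀ τ ∈ Set.Ico (0:ℝ) s, w τ < y τ := by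
      intro τ hτ
      by_contra hcc
      push_neg at hcc
      have : τ ∈ S := ⟨⟨hτ.1, hτ.2.le.trans hsT⟩, hcc⟩
      exact absurd (csInf_le hSbdd this) (not_le.2 hτ.2)
    have hws : w s ≤ y s := by
      have hcw : Filter.Tendsto (fun τ => y τ - w τ) (nhdsWithin s (Set.Ico 0 s))
          (nhds (y s - w s)) := by
        have : ContinuousWithinAt (fun τ => y τ - w τ) (Set.Icc 0 T) s :=
          (hyc.continuousOn.sub hwc) s ⟨hs0, hsT⟩
        exact (this.mono (fun x hx => ⟨hx.1, hx.2.le.trans hsT⟩)).tendsto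
      have hne : (nhdsWithin s (Set.Ico 0 s)).NeBot := by
        rw [← mem_closure_iff_nhdsWithin_neBot, closure_Ico hspos.ne]
        exact ⟨hs0, le_refl s⟩
      have := ge_of_tendsto hcw (Filter.eventually_of_mem self_mem_nhdsWithin
        (fun τ hτ => sub_nonneg.2 (hlt τ hτ).le))
      linarith [this]
    have hle : ∀ τ ∈ Set.Icc (0:ℝ) s, w τ ≤ y τ := by
      intro τ hτ
      rcases hτ.2.lt_or_eq with h | h
      · exact (hlt τ ⟨hτ.1, h⟩).le
      · rw [h]; exact hws
    have hys1 : y s ≤ 1 := hsmem.2.trans (hw1 s ⟨hs0, hsT⟩)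
    have hybound : ∀ τ ∈ Set.Icc (0:ℝ) s, y τ ∈ Set.Icc (0:ℝ) 1 := by
      intro τ hτ
      refine ⟨(Real.exp_pos _).le, ?_⟩
      exact le_trans (hymono ⟨hτ.1, hτ.2.trans hsT⟩ ⟨hs0, hsT⟩ hτ.2) hys1
    -- integrability
    have int1 : IntervalIntegrable (fun τ => w τ * (1 - Real.log (w τ))) MeasureTheory.volume 0 s := by
      apply ContinuousOn.intervalIntegrable
      rw [Set.uIcc_of_le hs0]
      exact osgood_f_cont.comp_continuousOn
        (hwc.mono (fun x hx => ⟨hx.1, hx.2.trans hsT⟩))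
    have int2 : IntervalIntegrable (fun τ => y τ * (1 - Real.log (y τ))) MeasureTheory.volume 0 s :=
      (osgood_f_cont.comp hyc).intervalIntegrable 0 s
    -- integral comparison
    have hcomp : (∫ τ in (0:ℝ)..s, w τ * (1 - Real.log (w τ)))
        ≤ ∫ τ in (0:ℝ)..s, y τ * (1 - Real.log (y τ)) := by
      apply intervalIntegral.integral_mono_on hs0 int1 int2
      intro τ hτ
      have hτT : τ ∈ Set.Icc (0:ℝ) T := ⟨hτ.1, hτ.2.trans hsT⟩
      exact osgood_f_mono ⟨hw0 τ hτT, hw1 τ hτT⟩ (hybound τ hτ) (hle τ hτ)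
    -- FTC
    have hFTC : (∫ τ in (0:ℝ)..s, K * (y τ * (1 - Real.log (y τ)))) = y s - y 0 := by
      apply intervalIntegral.integral_eq_sub_of_hasDerivAt
      · intro t _
        exact osgood_hasDerivAt K c t
      · exact ((continuous_const.mul (osgood_f_cont.comp hyc)).intervalIntegrable 0 s)
    have hchain : w s ≤ K * ∫ τ in (0:ℝ)..s, w τ * (1 - Real.log (w τ)) :=
      hineq s ⟨hs0, hsT⟩
    have h2 : K * (∫ τ in (0:ℝ)..s, w τ * (1 - Real.log (w τ)))
        ≤ K * ∫ τ in (0:ℝ)..s, y τ * (1 - Real.log (y τ)) :=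
      mul_le_mul_of_nonneg_left hcomp hK.le
    have h3 : K * (∫ τ in (0:ℝ)..s, y τ * (1 - Real.log (y τ))) = y s - y 0 := by
      rw [← hFTC, ← intervalIntegral.integral_const_mul]
    have hy0pos : 0 < y 0 := Real.exp_pos _
    have : w s ≤ w s - y 0 := by
      calc w s ≤ K * ∫ τ in (0:ℝ)..s, w τ * (1 - Real.log (w τ)) := hchain
        _ ≤ K * ∫ τ in (0:ℝ)..s, y τ * (1 - Real.log (y τ)) := h2
        _ = y s - y 0 := h3
        _ ≤ w s - y 0 := by linarith [hsmem.2]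
    linarith
  -- conclude
  by_contra hne
  have hwpos : 0 < w t₀ := lt_of_le_of_ne (hw0 t₀ ht₀) (Ne.symm hne)
  set c : ℝ := (1 - Real.log (w t₀)) * Real.exp (K * T) + 1 with hcdef
  have hlogw : Real.log (w t₀) ≤ 0 := Real.log_nonpos (hw0 t₀ ht₀) (hw1 t₀ ht₀)
  have hexpKT : (1:ℝ) ≤ Real.exp (K * T) :=
    Real.one_le_exp (mul_nonneg hK.le hT)
  have hc1 : 1 < c := by nlinarith
  have hkey := key c hc1
  have hbad : Real.exp (1 - c * Real.exp (-K * t₀)) ≤ w t₀ := by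
    rw [← Real.exp_log hwpos]
    apply Real.exp_le_exp.2
    have h1 : Real.exp (-K * t₀) = (Real.exp (K * t₀))⁻¹ := by
      rw [← Real.exp_neg]; ring_nf
    have h2 : Real.exp (K * t₀) ≤ Real.exp (K * T) :=
      Real.exp_le_exp.2 (mul_le_mul_of_nonneg_left ht₀.2 hK.le)
    have h3 : (1 - Real.log (w t₀)) * Real.exp (K * t₀) < c * 1 := by
      have : (1 - Real.log (w t₀)) * Real.exp (K * t₀)
          ≤ (1 - Real.log (w t₀)) * Real.exp (K * T) := by nlinarith
      nlinarith
    have h4 : 1 - Real.log (w t₀) < c * Real.exp (-K * t₀) := by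
      rw [h1]
      have hp : 0 < Real.exp (K * t₀) := Real.exp_pos _
      rw [← div_eq_mul_inv, lt_div_iff₀ hp]
      linarith [h3]
    linarith
  linarith
end

section
/- Let (X, ‖·‖) be a normed algebra of smooth functions (i.e., ‖fg‖ ≤ ‖f‖‖g‖) closed under differentiation, and for 0 < s define |||u|||_s = sup_{k ∈ ℕ₀} s^k ‖∂^k u‖ (k+1)²/k!. Then there is an absolute constant C (one may take C = 2π²/3) such that for all u, v with |||u|||_s, |||v|||_s < ∞ one has |||uv|||_s ≤ C |||u|||_s |||v|||_s. -/
open Finset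

open Finset

lemma contDiff_top_deriv {f : ℝ → ℝ} (hf : ContDiff ℝ (⊤ : ℕ∞) f) : ContDiff ℝ (⊤ : ℕ∞) (deriv f) := by
  have h : ContDiff ℝ (((⊤ : ℕ∞) : WithTop ℕ∞) + 1) f := by
    rw [← WithTop.coe_one, ← WithTop.coe_add, top_add]; exact hf
  exact (contDiff_succ_iff_deriv.mp h).2.2

lemma contDiff_top_iteratedDeriv {f : ℝ → ℝ} (hf : ContDiff ℝ (⊤ : ℕ∞) f) (k : ℕ) :
    ContDiff ℝ (⊤ : ℕ∞) (iteratedDeriv k f) := by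
  induction k with
  | zero => simpa
  | succ k ih => rw [iteratedDeriv_succ]; exact contDiff_top_deriv ih

lemma pascal_sum (A : ℕ → ℕ → ℝ) (k : ℕ) :
    ∑ l ∈ range (k + 1), (k.choose l : ℝ) * (A (l + 1) (k - l) + A l (k - l + 1))
      = ∑ l ∈ range (k + 2), ((k + 1).choose l : ℝ) * A l (k + 1 - l) := by
  have hS2 : ∑ l ∈ range (k + 1), (k.choose l : ℝ) * A l (k - l + 1)
      = ∑ l ∈ range (k + 1), (k.choose l : ℝ) * A l (k + 1 - l) := by
    refine Finset.sum_congr rfl fun l hl => ?_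
    have hlk : l ≤ k := Nat.lt_succ_iff.mp (Finset.mem_range.mp hl)
    rw [Nat.succ_sub hlk]
  have hg : ∑ l ∈ range (k + 2), (k.choose l : ℝ) * A l (k + 1 - l)
      = ∑ l ∈ range (k + 1), (k.choose (l + 1) : ℝ) * A (l + 1) (k - l) + (k.choose 0 : ℝ) * A 0 (k + 1) := by
    rw [Finset.sum_range_succ']
    simp [Nat.succ_sub_succ]
  have hg' : ∑ l ∈ range (k + 2), (k.choose l : ℝ) * A l (k + 1 - l)
      = ∑ l ∈ range (k + 1), (k.choose l : ℝ) * A l (k + 1 - l) := by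
    rw [Finset.sum_range_succ, Nat.choose_succ_self]
    simp
  have hRHS : ∑ l ∈ range (k + 2), ((k + 1).choose l : ℝ) * A l (k + 1 - l)
      = ∑ l ∈ range (k + 1), ((k + 1).choose (l + 1) : ℝ) * A (l + 1) (k - l) + ((k + 1).choose 0 : ℝ) * A 0 (k + 1) := by
    rw [Finset.sum_range_succ']
    simp [Nat.succ_sub_succ]
  rw [hRHS]
  have hch : ∀ l, ((k + 1).choose (l + 1) : ℝ) = (k.choose l : ℝ) + (k.choose (l + 1) : ℝ) := by
    intro l
    rw [Nat.choose_succ_succ]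
    push_cast
    ring
  simp only [hch, add_mul, mul_add, Finset.sum_add_distrib]
  rw [show (∑ l ∈ range (k + 1), (k.choose (l + 1) : ℝ) * A (l + 1) (k - l))
      = ∑ l ∈ range (k + 1), (k.choose l : ℝ) * A l (k + 1 - l) - (k.choose 0 : ℝ) * A 0 (k + 1) from by
    rw [← hg', hg]; ring]
  rw [hS2]
  simp
  ring

lemma hasDerivAt_iteratedDeriv {w : ℝ → ℝ} (hw : ContDiff ℝ (⊤ : ℕ∞) w) (l : ℕ) (x : ℝ) :
    HasDerivAt (iteratedDeriv l w) (iteratedDeriv (l + 1) w x) x := by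
  have h1 : DifferentiableAt ℝ (iteratedDeriv l w) x :=
    ((contDiff_top_iteratedDeriv hw l).differentiable (by simp)).differentiableAt
  have h2 := h1.hasDerivAt
  rwa [show deriv (iteratedDeriv l w) x = iteratedDeriv (l + 1) w x from by
    rw [iteratedDeriv_succ]] at h2

lemma leibniz_iteratedDeriv {u v : ℝ → ℝ} (hu : ContDiff ℝ (⊤ : ℕ∞) u) (hv : ContDiff ℝ (⊤ : ℕ∞) v) (k : ℕ) :
    iteratedDeriv k (u * v)
      = ∑ l ∈ range (k + 1), (k.choose l : ℝ) • (iteratedDeriv l u * iteratedDeriv (k - l) v) := by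
  induction k with
  | zero => simp
  | succ k ih =>
    funext x
    have hsum : HasDerivAt
        (fun y => ∑ l ∈ range (k + 1), (k.choose l : ℝ) *
          (iteratedDeriv l u y * iteratedDeriv (k - l) v y))
        (∑ l ∈ range (k + 1), (k.choose l : ℝ) *
          (iteratedDeriv (l + 1) u x * iteratedDeriv (k - l) v x
            + iteratedDeriv l u x * iteratedDeriv (k - l + 1) v x)) x := by
      refine HasDerivAt.fun_sum fun l _ => ?_
      have := ((hasDerivAt_iteratedDeriv hu l x).mul (hasDerivAt_iteratedDeriv hv (k - l) x)).const_mul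
        ((k.choose l : ℝ))
      simpa [mul_add] using this
    have hF : iteratedDeriv k (u * v)
        = fun y => ∑ l ∈ range (k + 1), (k.choose l : ℝ) *
            (iteratedDeriv l u y * iteratedDeriv (k - l) v y) := by
      rw [ih]; funext y
      simp [Finset.sum_apply, smul_eq_mul]
    rw [iteratedDeriv_succ, hF, hsum.deriv]
    have := pascal_sum (fun i j => iteratedDeriv i u x * iteratedDeriv j v x) k
    simp only [Finset.sum_apply, Pi.smul_apply, Pi.mul_apply, smul_eq_mul]
    exact this

lemma basel_partial (k : ℕ) :
    ∑ l ∈ range (k + 1), (1 : ℝ) / ((l : ℝ) + 1) ^ 2 ≤ Real.pi ^ 2 / 6 := by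
  have h := hasSum_zeta_two
  have h2 : ∑ n ∈ range (k + 2), (1 : ℝ) / (n : ℝ) ^ 2 ≤ Real.pi ^ 2 / 6 :=
    sum_le_hasSum (range (k + 2)) (fun i _ => by positivity) h
  calc ∑ l ∈ range (k + 1), (1 : ℝ) / ((l : ℝ) + 1) ^ 2
      = ∑ n ∈ range (k + 2), (1 : ℝ) / (n : ℝ) ^ 2 := by
        rw [Finset.sum_range_succ' (fun n : ℕ => (1 : ℝ) / (n : ℝ) ^ 2) (k + 1)]
        push_cast
        norm_num
    _ ≤ Real.pi ^ 2 / 6 := h2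

lemma comb_bound (k : ℕ) :
    ∑ l ∈ range (k + 1), ((k : ℝ) + 1) ^ 2 / (((l : ℝ) + 1) ^ 2 * (((k - l : ℕ) : ℝ) + 1) ^ 2)
      ≤ 2 * Real.pi ^ 2 / 3 := by
  have hterm : ∀ l ∈ range (k + 1),
      ((k : ℝ) + 1) ^ 2 / (((l : ℝ) + 1) ^ 2 * (((k - l : ℕ) : ℝ) + 1) ^ 2)
        ≤ 2 * ((1 : ℝ) / ((l : ℝ) + 1) ^ 2 + 1 / (((k - l : ℕ) : ℝ) + 1) ^ 2) := by
    intro l hl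
    have hlk : l ≤ k := Nat.lt_succ_iff.mp (Finset.mem_range.mp hl)
    set a : ℝ := (l : ℝ) + 1 with ha
    set b : ℝ := ((k - l : ℕ) : ℝ) + 1 with hb
    have hab : a + b = (k : ℝ) + 2 := by
      rw [ha, hb, Nat.cast_sub hlk]; ring
    have hapos : 0 < a := by positivity
    have hbpos : 0 < b := by positivity
    have hnum : ((k : ℝ) + 1) ^ 2 ≤ 2 * (a ^ 2 + b ^ 2) := by
      nlinarith [sq_nonneg (a - b), sq_nonneg (a + b - 1), hapos, hbpos]
    calc ((k : ℝ) + 1) ^ 2 / (a ^ 2 * b ^ 2) ≤ 2 * (a ^ 2 + b ^ 2) / (a ^ 2 * b ^ 2) := by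
          gcongr
      _ = 2 * ((1 : ℝ) / a ^ 2 + 1 / b ^ 2) := by field_simp; ring
  calc ∑ l ∈ range (k + 1), ((k : ℝ) + 1) ^ 2 / (((l : ℝ) + 1) ^ 2 * (((k - l : ℕ) : ℝ) + 1) ^ 2)
      ≤ ∑ l ∈ range (k + 1), 2 * ((1 : ℝ) / ((l : ℝ) + 1) ^ 2 + 1 / (((k - l : ℕ) : ℝ) + 1) ^ 2) :=
        Finset.sum_le_sum hterm
    _ = 2 * (∑ l ∈ range (k + 1), (1 : ℝ) / ((l : ℝ) + 1) ^ 2)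
        + 2 * (∑ l ∈ range (k + 1), (1 : ℝ) / (((k - l : ℕ) : ℝ) + 1) ^ 2) := by
        simp [mul_add, Finset.sum_add_distrib, Finset.mul_sum]
    _ = 4 * (∑ l ∈ range (k + 1), (1 : ℝ) / ((l : ℝ) + 1) ^ 2) := by
        have := Finset.sum_range_reflect (fun j => (1 : ℝ) / ((j : ℝ) + 1) ^ 2) (k + 1)
        simp only [Nat.add_sub_cancel] at this
        rw [this]; ring
    _ ≤ 4 * (Real.pi ^ 2 / 6) := by
        have := basel_partial k
        nlinarith
    _ = 2 * Real.pi ^ 2 / 3 := by ring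



/-- The analytic-scale norm `|||u|||_s = sup_k s^k ‖∂^k u‖ (k+1)²/k!` built from a norm `N`
on smooth functions. -/
noncomputable def analyticNorm (N : (ℝ → ℝ) → ℝ) (s : ℝ) (u : ℝ → ℝ) : ℝ :=
  ⨆ k : ℕ, s ^ k * N (iteratedDeriv k u) * ((k : ℝ) + 1) ^ 2 / (Nat.factorial k)

/-- Algebra property of the analytic scale: if `N` is a submultiplicative nonnegative norm on
smooth functions, then `|||uv|||_s ≤ (2π²/3) |||u|||_s |||v|||_s`. -/
theorem analyticNorm_mul_le (N : (ℝ → ℝ) → ℝ) (s : ℝ) (hs : 0 < s)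
    (hN0 : ∀ f, 0 ≤ N f)
    (hNadd : ∀ f g, N (f + g) ≤ N f + N g)
    (hNsmul : ∀ (c : ℝ) (f : ℝ → ℝ), N (c • f) ≤ |c| * N f)
    (hNmul : ∀ f g, ContDiff ℝ (⊤ : ℕ∞) f → ContDiff ℝ (⊤ : ℕ∞) g → N (f * g) ≤ N f * N g)
    (u v : ℝ → ℝ) (hu : ContDiff ℝ (⊤ : ℕ∞) u) (hv : ContDiff ℝ (⊤ : ℕ∞) v)
    (hbu : BddAbove (Set.range fun k : ℕ =>
      s ^ k * N (iteratedDeriv k u) * ((k : ℝ) + 1) ^ 2 / (Nat.factorial k)))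
    (hbv : BddAbove (Set.range fun k : ℕ =>
      s ^ k * N (iteratedDeriv k v) * ((k : ℝ) + 1) ^ 2 / (Nat.factorial k))) :
    analyticNorm N s (u * v)
      ≤ (2 * Real.pi ^ 2 / 3) * analyticNorm N s u * analyticNorm N s v := by
  have hNzero : N 0 = 0 := by
    have h := hNsmul 0 0
    simp at h
    exact le_antisymm h (hN0 0)
  set A := analyticNorm N s u with hA
  set B := analyticNorm N s v with hB
  have hAle : ∀ l : ℕ, s ^ l * N (iteratedDeriv l u) * ((l : ℝ) + 1) ^ 2 / (Nat.factorial l) ≤ A :=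
    fun l => le_ciSup hbu l
  have hBle : ∀ l : ℕ, s ^ l * N (iteratedDeriv l v) * ((l : ℝ) + 1) ^ 2 / (Nat.factorial l) ≤ B :=
    fun l => le_ciSup hbv l
  have hterm_nn : ∀ (w : ℝ → ℝ) (l : ℕ),
      0 ≤ s ^ l * N (iteratedDeriv l w) * ((l : ℝ) + 1) ^ 2 / (Nat.factorial l) :=
    fun w l => div_nonneg (mul_nonneg (mul_nonneg (pow_nonneg hs.le l) (hN0 _)) (by positivity))
      (Nat.cast_nonneg _)
  have hA0 : 0 ≤ A := le_trans (hterm_nn u 0) (hAle 0)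
  have hB0 : 0 ≤ B := le_trans (hterm_nn v 0) (hBle 0)
  rw [analyticNorm]
  refine ciSup_le fun k => ?_
  -- bound N (iteratedDeriv k (u*v))
  have hNk : N (iteratedDeriv k (u * v))
      ≤ ∑ l ∈ range (k + 1), (k.choose l : ℝ) * (N (iteratedDeriv l u) * N (iteratedDeriv (k - l) v)) := by
    rw [leibniz_iteratedDeriv hu hv k]
    calc N (∑ l ∈ range (k + 1), (k.choose l : ℝ) • (iteratedDeriv l u * iteratedDeriv (k - l) v))
        ≤ ∑ l ∈ range (k + 1), N ((k.choose l : ℝ) • (iteratedDeriv l u * iteratedDeriv (k - l) v)) :=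
          Finset.le_sum_of_subadditive N hNzero.le hNadd _ _
      _ ≤ ∑ l ∈ range (k + 1), (k.choose l : ℝ) * (N (iteratedDeriv l u) * N (iteratedDeriv (k - l) v)) := by
          refine Finset.sum_le_sum fun l _ => ?_
          calc N ((k.choose l : ℝ) • (iteratedDeriv l u * iteratedDeriv (k - l) v))
              ≤ |(k.choose l : ℝ)| * N (iteratedDeriv l u * iteratedDeriv (k - l) v) := hNsmul _ _
            _ ≤ (k.choose l : ℝ) * (N (iteratedDeriv l u) * N (iteratedDeriv (k - l) v)) := by
                rw [abs_of_nonneg (by positivity)]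
                exact mul_le_mul_of_nonneg_left
                  (hNmul _ _ (contDiff_top_iteratedDeriv hu l) (contDiff_top_iteratedDeriv hv (k - l)))
                  (by positivity)
  have hstep : s ^ k * N (iteratedDeriv k (u * v)) * ((k : ℝ) + 1) ^ 2 / (Nat.factorial k)
      ≤ ∑ l ∈ range (k + 1), s ^ k * ((k : ℝ) + 1) ^ 2 / (Nat.factorial k) *
          ((k.choose l : ℝ) * (N (iteratedDeriv l u) * N (iteratedDeriv (k - l) v))) := by
    rw [← Finset.mul_sum]
    have hc : (0 : ℝ) < s ^ k * ((k : ℝ) + 1) ^ 2 / (Nat.factorial k) := by positivity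
    calc s ^ k * N (iteratedDeriv k (u * v)) * ((k : ℝ) + 1) ^ 2 / (Nat.factorial k)
        = s ^ k * ((k : ℝ) + 1) ^ 2 / (Nat.factorial k) * N (iteratedDeriv k (u * v)) := by ring
      _ ≤ s ^ k * ((k : ℝ) + 1) ^ 2 / (Nat.factorial k) *
          (∑ l ∈ range (k + 1), (k.choose l : ℝ) * (N (iteratedDeriv l u) * N (iteratedDeriv (k - l) v))) :=
          mul_le_mul_of_nonneg_left hNk (le_of_lt hc)
  refine le_trans hstep ?_
  have hterm : ∀ l ∈ range (k + 1),
      s ^ k * ((k : ℝ) + 1) ^ 2 / (Nat.factorial k) *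
          ((k.choose l : ℝ) * (N (iteratedDeriv l u) * N (iteratedDeriv (k - l) v)))
        ≤ A * B * (((k : ℝ) + 1) ^ 2 / (((l : ℝ) + 1) ^ 2 * (((k - l : ℕ) : ℝ) + 1) ^ 2)) := by
    intro l hl
    have hlk : l ≤ k := Nat.lt_succ_iff.mp (Finset.mem_range.mp hl)
    have hfac : (k.choose l : ℝ) * (Nat.factorial l : ℝ) * (Nat.factorial (k - l) : ℝ)
        = (Nat.factorial k : ℝ) := by
      exact_mod_cast congrArg (Nat.cast : ℕ → ℝ) (Nat.choose_mul_factorial_mul_factorial hlk)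
    have hkey : s ^ k * ((k : ℝ) + 1) ^ 2 / (Nat.factorial k) *
          ((k.choose l : ℝ) * (N (iteratedDeriv l u) * N (iteratedDeriv (k - l) v)))
        = (s ^ l * N (iteratedDeriv l u) * ((l : ℝ) + 1) ^ 2 / (Nat.factorial l))
          * (s ^ (k - l) * N (iteratedDeriv (k - l) v) * (((k - l : ℕ) : ℝ) + 1) ^ 2 / (Nat.factorial (k - l)))
          * (((k : ℝ) + 1) ^ 2 / (((l : ℝ) + 1) ^ 2 * (((k - l : ℕ) : ℝ) + 1) ^ 2)) := by
      have hsk : s ^ l * s ^ (k - l) = s ^ k := by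
        rw [← pow_add, Nat.add_sub_cancel' hlk]
      have hl1 : ((l : ℝ) + 1) ≠ 0 := by positivity
      have hl2 : (((k - l : ℕ) : ℝ) + 1) ≠ 0 := by positivity
      have hf1 : (Nat.factorial l : ℝ) ≠ 0 :=
        (Nat.cast_pos.mpr (Nat.factorial_pos l)).ne'
      have hf2 : (Nat.factorial (k - l) : ℝ) ≠ 0 :=
        (Nat.cast_pos.mpr (Nat.factorial_pos (k - l))).ne'
      have hC : (k.choose l : ℝ) ≠ 0 :=
        (Nat.cast_pos.mpr (Nat.choose_pos hlk)).ne'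
      rw [← hsk, ← hfac]
      have ha0 : ((l : ℝ) + 1) ^ 2 ≠ 0 := pow_ne_zero _ hl1
      have hb0 : (((k - l : ℕ) : ℝ) + 1) ^ 2 ≠ 0 := pow_ne_zero _ hl2
      generalize ((l : ℝ) + 1) ^ 2 = a2 at ha0 ⊢
      generalize (((k - l : ℕ) : ℝ) + 1) ^ 2 = b2 at hb0 ⊢
      generalize ((k : ℝ) + 1) ^ 2 = c2
      generalize hNu : N (iteratedDeriv l u) = Nu
      generalize hNv : N (iteratedDeriv (k - l) v) = Nv
      generalize (s : ℝ) ^ l = s1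
      generalize (s : ℝ) ^ (k - l) = s2
      generalize hCC : (k.choose l : ℝ) = C at hC
      generalize hF1 : (Nat.factorial l : ℝ) = F1 at hf1
      generalize hF2 : (Nat.factorial (k - l) : ℝ) = F2 at hf2
      field_simp
    calc s ^ k * ((k : ℝ) + 1) ^ 2 / (Nat.factorial k) *
          ((k.choose l : ℝ) * (N (iteratedDeriv l u) * N (iteratedDeriv (k - l) v)))
        = (s ^ l * N (iteratedDeriv l u) * ((l : ℝ) + 1) ^ 2 / (Nat.factorial l))
          * (s ^ (k - l) * N (iteratedDeriv (k - l) v) * (((k - l : ℕ) : ℝ) + 1) ^ 2 / (Nat.factorial (k - l)))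
          * (((k : ℝ) + 1) ^ 2 / (((l : ℝ) + 1) ^ 2 * (((k - l : ℕ) : ℝ) + 1) ^ 2)) := hkey
      _ ≤ A * B * (((k : ℝ) + 1) ^ 2 / (((l : ℝ) + 1) ^ 2 * (((k - l : ℕ) : ℝ) + 1) ^ 2)) := by
          have h1 := hAle l
          have h2 := hBle (k - l)
          have p1 := hterm_nn u l
          have p2 := hterm_nn v (k - l)
          have p3 : (0 : ℝ) ≤ ((k : ℝ) + 1) ^ 2 / (((l : ℝ) + 1) ^ 2 * (((k - l : ℕ) : ℝ) + 1) ^ 2) := by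
            positivity
          gcongr
  calc ∑ l ∈ range (k + 1), s ^ k * ((k : ℝ) + 1) ^ 2 / (Nat.factorial k) *
          ((k.choose l : ℝ) * (N (iteratedDeriv l u) * N (iteratedDeriv (k - l) v)))
      ≤ ∑ l ∈ range (k + 1),
          A * B * (((k : ℝ) + 1) ^ 2 / (((l : ℝ) + 1) ^ 2 * (((k - l : ℕ) : ℝ) + 1) ^ 2)) :=
        Finset.sum_le_sum hterm
    _ = A * B * ∑ l ∈ range (k + 1),
          ((k : ℝ) + 1) ^ 2 / (((l : ℝ) + 1) ^ 2 * (((k - l : ℕ) : ℝ) + 1) ^ 2) := by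
        rw [Finset.mul_sum]
    _ ≤ A * B * (2 * Real.pi ^ 2 / 3) :=
        mul_le_mul_of_nonneg_left (comb_bound k) (by positivity)
    _ = 2 * Real.pi ^ 2 / 3 * A * B := by ring
end

section
/- Let (X, ‖·‖) be a normed space of smooth functions closed under differentiation, and for 0 < s ≤ 1 define |||u|||_s = sup_{k ∈ ℕ₀} s^k ‖∂^k u‖ (k+1)²/k!. Then for all 0 < s′ < s ≤ 1 and all u with |||u|||_s < ∞, one has |||∂u|||_{s′} ≤ (4/(e(s − s′))) |||u|||_s. In particular |||∂u|||_{s′} ≤ C/(s − s′) · |||u|||_s for an absolute constant C. -/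
lemma key_pow_ineq (s s' : ℝ) (hs' : 0 < s') (hss : s' < s) :
    ∀ k : ℕ, ((k : ℝ) + 1) * s' ^ k * (s - s') ≤ s ^ (k + 1) - s' ^ (k + 1) := by
  intro k
  induction k with
  | zero => simp
  | succ k ih =>
    have hs : 0 < s := hs'.trans hss
    have hp : s' ^ k ≤ s ^ k := pow_le_pow_left₀ hs'.le hss.le k
    have hp1 : s' ^ (k + 1) ≤ s ^ (k + 1) := pow_le_pow_left₀ hs'.le hss.le (k + 1)
    have hpos : (0:ℝ) < s' ^ k := pow_pos hs' k
    push_cast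
    calc ((k : ℝ) + 1 + 1) * s' ^ (k + 1) * (s - s')
        = s' * (((k : ℝ) + 1) * s' ^ k * (s - s')) + s' ^ (k + 1) * (s - s') := by ring
      _ ≤ s' * (s ^ (k + 1) - s' ^ (k + 1)) + s ^ (k + 1) * (s - s') := by
          have h1 : s' * (((k : ℝ) + 1) * s' ^ k * (s - s')) ≤
              s' * (s ^ (k + 1) - s' ^ (k + 1)) :=
            mul_le_mul_of_nonneg_left ih hs'.le
          have h2 : s' ^ (k + 1) * (s - s') ≤ s ^ (k + 1) * (s - s') :=
            mul_le_mul_of_nonneg_right hp1 (by linarith)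
          linarith
      _ = s ^ (k + 1 + 1) - s' ^ (k + 1 + 1) := by ring

/-- Derivative estimate in the analytic scale: for `0 < s' < s ≤ 1`,
`|||∂u|||_{s'} ≤ (4/(e(s − s'))) |||u|||_s`. -/
theorem analyticNorm_deriv_le (N : (ℝ → ℝ) → ℝ) (s s' : ℝ)
    (hs' : 0 < s') (hss : s' < s) (hs1 : s ≤ 1)
    (hN0 : ∀ f, 0 ≤ N f)
    (u : ℝ → ℝ) (hu : ContDiff ℝ (⊤ : ℕ∞) u)
    (hbu : BddAbove (Set.range fun k : ℕ =>
      s ^ k * N (iteratedDeriv k u) * ((k : ℝ) + 1) ^ 2 / (Nat.factorial k))) :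
    analyticNorm N s' (deriv u)
      ≤ (4 / (Real.exp 1 * (s - s'))) * analyticNorm N s u := by
  have hd : (0:ℝ) < s - s' := by linarith
  have he : (0:ℝ) < Real.exp 1 := Real.exp_pos 1
  have he4 : Real.exp 1 < 4 := by
    have := Real.exp_one_lt_d9; linarith
  have hC : (0:ℝ) < 4 / (Real.exp 1 * (s - s')) := by positivity
  unfold analyticNorm
  apply ciSup_le
  intro k
  rw [← iteratedDeriv_succ']
  set A := N (iteratedDeriv (k + 1) u) with hA
  have hA0 : 0 ≤ A := hN0 _
  have hF : (0:ℝ) < (Nat.factorial k : ℝ) := by positivity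
  have hkey : ((k : ℝ) + 1) * s' ^ k * (s - s') ≤ s ^ (k + 1) := by
    have := key_pow_ineq s s' hs' hss k
    have := pow_pos hs' (k + 1)
    linarith
  -- coefficient inequality
  have hcoef : s' ^ k * ((k : ℝ) + 1) ^ 2 / (Nat.factorial k) ≤
      (4 / (Real.exp 1 * (s - s'))) *
        (s ^ (k + 1) * (((k + 1 : ℕ) : ℝ) + 1) ^ 2 / (Nat.factorial (k + 1))) := by
    rw [Nat.factorial_succ]
    push_cast
    rw [div_mul_div_comm, div_le_div_iff₀ hF (by positivity)]
    have hsp : (0:ℝ) ≤ s ^ (k + 1) := pow_nonneg (by linarith) _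
    have hk1 : (0:ℝ) < (k : ℝ) + 1 := by positivity
    have h1 : Real.exp 1 * ((k:ℝ)+1)^2 * (Nat.factorial k : ℝ) * (((k:ℝ) + 1) * s' ^ k * (s - s'))
        ≤ Real.exp 1 * ((k:ℝ)+1)^2 * (Nat.factorial k : ℝ) * s ^ (k + 1) :=
      mul_le_mul_of_nonneg_left hkey (by positivity)
    have h2 : Real.exp 1 * ((k:ℝ)+1)^2 ≤ 4 * (((k:ℝ)+1+1)^2) := by nlinarith
    have h3 : Real.exp 1 * ((k:ℝ)+1)^2 * ((Nat.factorial k : ℝ) * s ^ (k + 1))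
        ≤ 4 * (((k:ℝ)+1+1)^2) * ((Nat.factorial k : ℝ) * s ^ (k + 1)) :=
      mul_le_mul_of_nonneg_right h2 (by positivity)
    nlinarith [h1, h3]
  have hterm : s ^ (k + 1) * A * (((k + 1 : ℕ) : ℝ) + 1) ^ 2 / (Nat.factorial (k + 1)) ≤
      analyticNorm N s u := le_ciSup hbu (k + 1)
  calc s' ^ k * A * ((k : ℝ) + 1) ^ 2 / (Nat.factorial k)
      = A * (s' ^ k * ((k : ℝ) + 1) ^ 2 / (Nat.factorial k)) := by ring
    _ ≤ A * ((4 / (Real.exp 1 * (s - s'))) *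
        (s ^ (k + 1) * (((k + 1 : ℕ) : ℝ) + 1) ^ 2 / (Nat.factorial (k + 1)))) :=
        mul_le_mul_of_nonneg_left hcoef hA0
    _ = (4 / (Real.exp 1 * (s - s'))) *
        (s ^ (k + 1) * A * (((k + 1 : ℕ) : ℝ) + 1) ^ 2 / (Nat.factorial (k + 1))) := by ring
    _ ≤ (4 / (Real.exp 1 * (s - s'))) * analyticNorm N s u :=
        mul_le_mul_of_nonneg_left hterm hC.le
end

section
/- Let C > 0 and A > 0, and suppose a sequence of continuous functions y_n : [0, T] → [0, ∞) with T ≤ min(1/C, 1/(8CA)) satisfies y_0 ≡ 0 and, for all n and all t ∈ [0, T], y_{n+1}(t) ≤ exp(C ∫₀ᵗ y_n) · A + (C/2) ∫₀ᵗ exp(C ∫_τ^t y_n) (y_n(τ) + y_n(τ)²) dτ. Then y_n(t) ≤ 2A/(1 − 4CAt) for all n ≥ 0 and all t ∈ [0, T]. -/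
open MeasureTheory Set intervalIntegral

/-- Uniform-bound induction for the approximation scheme: if `y₀ ≡ 0` and each `y_{n+1}`
satisfies the stated integral inequality on `[0,T]` with `T ≤ min(1/C, 1/(8CA))`, then
`y_n(t) ≤ 2A/(1 − 4CAt)` for all `n` and `t ∈ [0,T]`. -/
theorem uniform_bound_induction (C A T : ℝ) (hC : 0 < C) (hA : 0 < A)
    (hT : T ≤ min (1 / C) (1 / (8 * C * A)))
    (y : ℕ → ℝ → ℝ)
    (hcont : ∀ n, ContinuousOn (y n) (Set.Icc 0 T))
    (hnonneg : ∀ n, ∀ t ∈ Set.Icc (0 : ℝ) T, 0 ≤ y n t)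
    (hzero : ∀ t ∈ Set.Icc (0 : ℝ) T, y 0 t = 0)
    (hrec : ∀ n, ∀ t ∈ Set.Icc (0 : ℝ) T,
      y (n + 1) t ≤ Real.exp (C * ∫ s in (0 : ℝ)..t, y n s) * A
        + (C / 2) * ∫ τ in (0 : ℝ)..t,
            Real.exp (C * ∫ s in τ..t, y n s) * (y n τ + (y n τ) ^ 2)) :
    ∀ n, ∀ t ∈ Set.Icc (0 : ℝ) T, y n t ≤ 2 * A / (1 - 4 * C * A * t) := by
  have hTC : T ≤ 1 / C := hT.trans (min_le_left _ _)
  have hTA : T ≤ 1 / (8 * C * A) := hT.trans (min_le_right _ _)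
  have h8CA : (0:ℝ) < 8 * C * A := by positivity
  have h8 : 8 * C * A * T ≤ 1 := by
    have := (le_div_iff₀ h8CA).mp hTA; linarith
  -- lower bound for the denominator
  have hs : ∀ τ ∈ Set.Icc (0:ℝ) T, (1:ℝ)/2 ≤ 1 - 4 * C * A * τ := by
    intro τ hτ
    have h1 : 4 * C * A * τ ≤ 4 * C * A * T := by nlinarith [hτ.1, hτ.2]
    linarith
  have hspos : ∀ τ ∈ Set.Icc (0:ℝ) T, (0:ℝ) < 1 - 4 * C * A * τ := by
    intro τ hτ; linarith [hs τ hτ]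
  -- continuity of g
  have hgcont : ContinuousOn (fun τ => 2 * A / (1 - 4 * C * A * τ)) (Set.Icc (0:ℝ) T) := by
    apply ContinuousOn.div continuousOn_const (by fun_prop)
    intro τ hτ; exact ne_of_gt (hspos τ hτ)
  -- derivative of the linear map
  have hlin : ∀ x : ℝ, HasDerivAt (fun x : ℝ => 1 - 4 * C * A * x) (-(4 * C * A)) x := by
    intro x
    simpa using ((hasDerivAt_id x).const_mul (4 * C * A)).const_sub 1
  -- exact integral of g
  have hintg : ∀ a b : ℝ, 0 ≤ a → a ≤ b → b ≤ T →
      ∫ τ in a..b, 2 * A / (1 - 4 * C * A * τ)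
        = (Real.log (1 - 4 * C * A * a) - Real.log (1 - 4 * C * A * b)) / (2 * C) := by
    intro a b ha hab hbT
    have hsub : Set.uIcc a b ⊆ Set.Icc 0 T := by
      rw [Set.uIcc_of_le hab]; exact Set.Icc_subset_Icc ha hbT
    have key : ∫ τ in a..b, 2 * A / (1 - 4 * C * A * τ)
        = (fun x => -(Real.log (1 - 4 * C * A * x) / (2 * C))) b
          - (fun x => -(Real.log (1 - 4 * C * A * x) / (2 * C))) a := by
      apply intervalIntegral.integral_eq_sub_of_hasDerivAt
      · intro x hx
        have hxp := hspos x (hsub hx)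
        have hd := ((hlin x).log (ne_of_gt hxp)).div_const (2 * C)
        have := hd.neg
        refine this.congr_deriv ?_
        field_simp
        ring
      · exact (hgcont.mono hsub).intervalIntegrable
    rw [key]; ring
  intro n
  induction n with
  | zero =>
    intro t ht
    rw [hzero t ht]
    have := hspos t ht
    positivity
  | succ n ih =>
    intro t ht
    obtain ⟨ht0, htT⟩ := ht
    -- integrability / comparison of y n with g
    have hyc : ContinuousOn (y n) (Set.Icc 0 T) := hcont n
    have hcmp : ∀ a b : ℝ, 0 ≤ a → a ≤ b → b ≤ T →
        ∫ τ in a..b, y n τ ≤ ∫ τ in a..b, 2 * A / (1 - 4 * C * A * τ) := by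
      intro a b ha hab hbT
      have hsub : Set.uIcc a b ⊆ Set.Icc 0 T := by
        rw [Set.uIcc_of_le hab]; exact Set.Icc_subset_Icc ha hbT
      refine intervalIntegral.integral_mono_on hab
        ((hyc.mono hsub).intervalIntegrable) ((hgcont.mono hsub).intervalIntegrable) ?_
      intro x hx
      exact ih x (hsub (by rwa [Set.uIcc_of_le hab]))
    -- exponential bound
    have hexp : ∀ a b : ℝ, 0 ≤ a → a ≤ b → b ≤ T →
        Real.exp (C * ∫ τ in a..b, y n τ)
          ≤ Real.sqrt (1 - 4 * C * A * a) / Real.sqrt (1 - 4 * C * A * b) := by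
      intro a b ha hab hbT
      have hsa := hspos a ⟨ha, hab.trans hbT⟩
      have hsb := hspos b ⟨ha.trans hab, hbT⟩
      have h1 : C * ∫ τ in a..b, y n τ
          ≤ C * ((Real.log (1 - 4 * C * A * a) - Real.log (1 - 4 * C * A * b)) / (2 * C)) := by
        rw [← hintg a b ha hab hbT]
        exact mul_le_mul_of_nonneg_left (hcmp a b ha hab hbT) hC.le
      calc Real.exp (C * ∫ τ in a..b, y n τ)
          ≤ Real.exp (C * ((Real.log (1 - 4 * C * A * a)
              - Real.log (1 - 4 * C * A * b)) / (2 * C))) := Real.exp_le_exp.mpr h1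
        _ = Real.sqrt (1 - 4 * C * A * a) / Real.sqrt (1 - 4 * C * A * b) := by
            rw [Real.sqrt_eq_rpow, Real.sqrt_eq_rpow, Real.rpow_def_of_pos hsa,
              Real.rpow_def_of_pos hsb, ← Real.exp_sub]
            congr 1
            field_simp
    -- notation
    have htmem : t ∈ Set.Icc (0:ℝ) T := ⟨ht0, htT⟩
    have hstpos := hspos t htmem
    have hst2 := hs t htmem
    have hrtpos : 0 < Real.sqrt (1 - 4 * C * A * t) := Real.sqrt_pos.mpr hstpos
    have hrtsq : (Real.sqrt (1 - 4 * C * A * t)) ^ 2 = 1 - 4 * C * A * t :=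
      Real.sq_sqrt hstpos.le
    have hrt1 : Real.sqrt (1 - 4 * C * A * t) ≤ 1 := by
      have h1 : 1 - 4 * C * A * t ≤ 1 := by nlinarith
      calc Real.sqrt (1 - 4 * C * A * t) ≤ Real.sqrt 1 := Real.sqrt_le_sqrt h1
        _ = 1 := Real.sqrt_one
    set rt := Real.sqrt (1 - 4 * C * A * t) with hrtdef
    -- first term
    have hterm1 : Real.exp (C * ∫ s in (0:ℝ)..t, y n s) * A ≤ (1 / rt) * A := by
      have := hexp 0 t le_rfl ht0 htT
      rw [show 1 - 4 * C * A * 0 = (1:ℝ) by ring, Real.sqrt_one] at this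
      exact mul_le_mul_of_nonneg_right this hA.le
    -- pointwise bound for outer integrand
    have hptwise : ∀ τ ∈ Set.Icc (0:ℝ) t,
        Real.exp (C * ∫ s in τ..t, y n s) * (y n τ + (y n τ) ^ 2)
          ≤ (Real.sqrt (1 - 4 * C * A * τ) / rt)
            * (2 * A / (1 - 4 * C * A * τ) + (2 * A / (1 - 4 * C * A * τ)) ^ 2) := by
      intro τ hτ
      have hτT : τ ∈ Set.Icc (0:ℝ) T := ⟨hτ.1, hτ.2.trans htT⟩
      have hy0 := hnonneg n τ hτT
      have hyg := ih τ hτT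
      have hgn : 0 ≤ 2 * A / (1 - 4 * C * A * τ) := le_trans hy0 hyg
      have h1 := hexp τ t hτ.1 hτ.2 htT
      have h2 : y n τ + (y n τ) ^ 2
          ≤ 2 * A / (1 - 4 * C * A * τ) + (2 * A / (1 - 4 * C * A * τ)) ^ 2 := by
        nlinarith
      have h3 : 0 ≤ y n τ + (y n τ) ^ 2 := by positivity
      exact mul_le_mul h1 h2 h3 (by positivity)
    -- integrability of the outer integrands
    have hIccsub : Set.Icc (0:ℝ) t ⊆ Set.Icc (0:ℝ) T := Set.Icc_subset_Icc le_rfl htT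
    have huIcc : Set.uIcc (0:ℝ) t = Set.Icc (0:ℝ) t := Set.uIcc_of_le ht0
    have hyIcc : ContinuousOn (y n) (Set.Icc (0:ℝ) t) := hyc.mono hIccsub
    have hprim : ContinuousOn (fun τ => ∫ s in τ..t, y n s) (Set.Icc (0:ℝ) t) := by
      rw [← huIcc]
      exact intervalIntegral.continuousOn_primitive_interval_left
        (by rw [huIcc]; exact hyIcc.integrableOn_Icc)
    have hLcont : ContinuousOn
        (fun τ => Real.exp (C * ∫ s in τ..t, y n s) * (y n τ + (y n τ) ^ 2))
        (Set.Icc (0:ℝ) t) := by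
      apply ContinuousOn.mul
      · exact Real.continuous_exp.comp_continuousOn (continuousOn_const.mul hprim)
      · exact hyIcc.add (hyIcc.pow 2)
    have hRcont : ContinuousOn
        (fun τ => (Real.sqrt (1 - 4 * C * A * τ) / rt)
            * (2 * A / (1 - 4 * C * A * τ) + (2 * A / (1 - 4 * C * A * τ)) ^ 2))
        (Set.Icc (0:ℝ) t) := by
      have hg' : ContinuousOn (fun τ => 2 * A / (1 - 4 * C * A * τ)) (Set.Icc (0:ℝ) t) :=
        hgcont.mono hIccsub
      apply ContinuousOn.mul
      · exact ContinuousOn.div (Real.continuous_sqrt.comp_continuousOn (by fun_prop))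
          continuousOn_const (fun x _ => ne_of_gt hrtpos)
      · exact hg'.add (hg'.pow 2)
    -- outer integral comparison
    have houter : (∫ τ in (0:ℝ)..t, Real.exp (C * ∫ s in τ..t, y n s) * (y n τ + (y n τ) ^ 2))
        ≤ ∫ τ in (0:ℝ)..t, (Real.sqrt (1 - 4 * C * A * τ) / rt)
            * (2 * A / (1 - 4 * C * A * τ) + (2 * A / (1 - 4 * C * A * τ)) ^ 2) := by
      refine intervalIntegral.integral_mono_on ht0
        ((hLcont.mono (by rw [huIcc])).intervalIntegrable)
        ((hRcont.mono (by rw [huIcc])).intervalIntegrable) hptwise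
    -- exact value of the majorant integral
    have hH : ∀ x ∈ Set.uIcc (0:ℝ) t,
        HasDerivAt (fun x => (2 * A / C) * (Real.sqrt (1 - 4 * C * A * x))⁻¹
            - Real.sqrt (1 - 4 * C * A * x) / C)
          (Real.sqrt (1 - 4 * C * A * x)
            * (2 * A / (1 - 4 * C * A * x) + (2 * A / (1 - 4 * C * A * x)) ^ 2)) x := by
      intro x hx
      have hxT : x ∈ Set.Icc (0:ℝ) T := hIccsub (by rwa [← huIcc])
      have hxp := hspos x hxT
      have hrxpos : 0 < Real.sqrt (1 - 4 * C * A * x) := Real.sqrt_pos.mpr hxp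
      have hrxsq : (Real.sqrt (1 - 4 * C * A * x)) ^ 2 = 1 - 4 * C * A * x :=
        Real.sq_sqrt hxp.le
      have hds : HasDerivAt (fun x => Real.sqrt (1 - 4 * C * A * x))
          (-(4 * C * A) / (2 * Real.sqrt (1 - 4 * C * A * x))) x :=
        (hlin x).sqrt (ne_of_gt hxp)
      have hd1 := ((hds.inv (ne_of_gt hrxpos)).const_mul (2 * A / C)).sub (hds.div_const C)
      refine hd1.congr_deriv ?_
      set r := Real.sqrt (1 - 4 * C * A * x) with hr
      rw [← hrxsq]
      have hrne : r ≠ 0 := ne_of_gt hrxpos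
      field_simp
      ring
    have hRval : (∫ τ in (0:ℝ)..t, Real.sqrt (1 - 4 * C * A * τ)
            * (2 * A / (1 - 4 * C * A * τ) + (2 * A / (1 - 4 * C * A * τ)) ^ 2))
        = ((2 * A / C) * rt⁻¹ - rt / C) - ((2 * A / C) - 1 / C) := by
      have key := intervalIntegral.integral_eq_sub_of_hasDerivAt hH
        (by
          apply ContinuousOn.intervalIntegrable
          rw [huIcc]
          have hg' : ContinuousOn (fun τ => 2 * A / (1 - 4 * C * A * τ)) (Set.Icc (0:ℝ) t) :=
            hgcont.mono hIccsub
          exact (Real.continuous_sqrt.comp_continuousOn (by fun_prop)).mul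
            (hg'.add (hg'.pow 2)))
      rw [key]
      norm_num
      rw [← hrtdef]
    -- combine
    have hmain := hrec n t htmem
    have hchain : y (n + 1) t ≤ (1 / rt) * A
        + (C / 2) * ((((2 * A / C) * rt⁻¹ - rt / C) - ((2 * A / C) - 1 / C)) / rt) := by
      refine hmain.trans (add_le_add hterm1 ?_)
      refine mul_le_mul_of_nonneg_left ?_ (by positivity)
      refine houter.trans ?_
      have : (∫ τ in (0:ℝ)..t, (Real.sqrt (1 - 4 * C * A * τ) / rt)
            * (2 * A / (1 - 4 * C * A * τ) + (2 * A / (1 - 4 * C * A * τ)) ^ 2))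
          = (∫ τ in (0:ℝ)..t, Real.sqrt (1 - 4 * C * A * τ)
            * (2 * A / (1 - 4 * C * A * τ) + (2 * A / (1 - 4 * C * A * τ)) ^ 2)) / rt := by
        rw [← intervalIntegral.integral_div]
        congr 1
        ext τ
        ring
      rw [this, hRval]
    -- final arithmetic
    have hCt : C * t ≤ 1 := by
      have : t ≤ 1 / C := htT.trans hTC
      calc C * t ≤ C * (1 / C) := mul_le_mul_of_nonneg_left this hC.le
        _ = 1 := by field_simp
    have hkey : rt * (1 - rt) ≤ 2 * A := by
      nlinarith [sq_nonneg (1 - rt), hrtsq, hrtpos.le, hrt1]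
    refine hchain.trans ?_
    rw [← hrtsq, ← sub_nonneg]
    have hrtne : rt ≠ 0 := ne_of_gt hrtpos
    have hCne : C ≠ 0 := ne_of_gt hC
    have heq : 2 * A / rt ^ 2
        - ((1 / rt) * A
          + (C / 2) * ((((2 * A / C) * rt⁻¹ - rt / C) - ((2 * A / C) - 1 / C)) / rt))
        = (2 * A - rt * (1 - rt)) / (2 * rt ^ 2) := by
      field_simp
      ring
    rw [heq]
    apply div_nonneg (by linarith) (by positivity)
end

section
/- Let C > 0, M ≥ 1, T > 0, and let w̃ : [0,T] → [0,1] be a continuous function satisfying w̃(t) ≤ C M ∫₀ᵗ w̃(τ) ln(e + M/w̃(τ)) dτ for all t ∈ [0, T] (with the integrand interpreted as 0 where w̃(τ) = 0). Then w̃ ≡ 0 on [0, T]. -/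
set_option maxHeartbeats 1000000

open Set intervalIntegral

noncomputable def gOs (x : ℝ) : ℝ := x * (1 - Real.log x)

lemma gOs_cont : Continuous gOs := by
  have : gOs = fun x => x - x * Real.log x := by funext x; simp [gOs]; ring
  rw [this]
  exact continuous_id.sub Real.continuous_mul_log

lemma gOs_nonneg {x : ℝ} (h : x ∈ Set.Icc (0:ℝ) 1) : 0 ≤ gOs x := by
  rcases eq_or_lt_of_le h.1 with h0 | h0
  · simp [gOs, ← h0]
  · have : Real.log x ≤ 0 := Real.log_nonpos h.1 h.2
    have : 0 ≤ 1 - Real.log x := by linarith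
    exact mul_nonneg h.1 this

lemma gOs_mono : MonotoneOn gOs (Set.Icc (0:ℝ) 1) := by
  have : StrictMonoOn gOs (Set.Icc (0:ℝ) 1) := by
    apply strictMonoOn_of_deriv_pos (convex_Icc 0 1) gOs_cont.continuousOn
    intro x hx
    rw [interior_Icc] at hx
    have hd : HasDerivAt gOs (-Real.log x) x := by
      have h1 : HasDerivAt (fun y : ℝ => y * (1 - Real.log y))
          (1 * (1 - Real.log x) + x * (-x⁻¹)) x :=
        (hasDerivAt_id x).mul ((Real.hasDerivAt_log hx.1.ne').const_sub 1)
      convert h1 using 1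
      · rfl
      have hxx : x * -x⁻¹ = -1 := by
        field_simp
        exact neg_div_self hx.1.ne' ▸ by rw [neg_div, div_self hx.1.ne']
      rw [hxx]; ring
    rw [hd.deriv]
    have := Real.log_neg hx.1 hx.2
    linarith
  exact this.monotoneOn

lemma integrand_le {M x : ℝ} (hM : 1 ≤ M) (hx : x ∈ Set.Icc (0:ℝ) 1) :
    x * Real.log (Real.exp 1 + M / x) ≤ Real.log (Real.exp 1 + M) * gOs x := by
  have hL1 : 1 ≤ Real.log (Real.exp 1 + M) := by
    have : Real.exp 1 ≤ Real.exp 1 + M := by linarith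
    calc 1 = Real.log (Real.exp 1) := (Real.log_exp 1).symm
    _ ≤ _ := Real.log_le_log (Real.exp_pos 1) this
  rcases eq_or_lt_of_le hx.1 with h0 | h0
  · simp [gOs, ← h0]
  · have hxne : x ≠ 0 := h0.ne'
    have hkey : Real.log (Real.exp 1 + M / x) ≤ Real.log (Real.exp 1 + M) * (1 - Real.log x) := by
      have h1 : Real.exp 1 + M / x ≤ (Real.exp 1 + M) / x := by
        rw [add_div]
        have : Real.exp 1 ≤ Real.exp 1 / x := by
          rw [le_div_iff₀ h0]
          nlinarith [Real.exp_pos 1, hx.2]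
        linarith
      have hpos : 0 < Real.exp 1 + M / x := by positivity
      have h2 : Real.log (Real.exp 1 + M / x) ≤ Real.log ((Real.exp 1 + M) / x) :=
        Real.log_le_log hpos h1
      have h3 : Real.log ((Real.exp 1 + M) / x)
          = Real.log (Real.exp 1 + M) - Real.log x := by
        rw [Real.log_div (by positivity) hxne]
      have hlx : Real.log x ≤ 0 := Real.log_nonpos hx.1 hx.2
      nlinarith
    calc x * Real.log (Real.exp 1 + M / x)
        ≤ x * (Real.log (Real.exp 1 + M) * (1 - Real.log x)) :=
          mul_le_mul_of_nonneg_left hkey hx.1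
      _ = Real.log (Real.exp 1 + M) * gOs x := by unfold gOs; ring

/-- Osgood-type comparison with explicit supersolution. -/
lemma osgood_compare (K T : ℝ) (hK : 0 < K) (wt : ℝ → ℝ)
    (hwtc : ContinuousOn wt (Set.Icc 0 T))
    (hwt01 : ∀ t ∈ Set.Icc (0:ℝ) T, wt t ∈ Set.Icc (0:ℝ) 1)
    (h : ∀ t ∈ Set.Icc (0:ℝ) T, wt t ≤ K * ∫ τ in (0:ℝ)..t, gOs (wt τ))
    (b : ℝ) (hb : Real.exp (2*K*T) ≤ b) :
    ∀ t ∈ Set.Icc (0:ℝ) T, wt t < Real.exp (1 - b * Real.exp (-(2*K)*t)) := by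
  intro t₀ ht₀
  have hT : 0 ≤ T := ht₀.1.trans ht₀.2
  set u : ℝ → ℝ := fun s => Real.exp (1 - b * Real.exp (-(2*K)*s)) with hu_def
  have hb0 : 0 < b := lt_of_lt_of_le (Real.exp_pos _) hb
  have hupos : ∀ s, 0 < u s := fun s => Real.exp_pos _
  have hucont : Continuous u := by
    continuity
  have hule1 : ∀ s ∈ Set.Icc (0:ℝ) T, u s ≤ 1 := by
    intro s hs
    have h1 : Real.exp (2*K*s) ≤ b := le_trans (Real.exp_le_exp.mpr (by nlinarith [hs.2])) hb
    have : (1:ℝ) ≤ b * Real.exp (-(2*K)*s) := by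
      have := mul_le_mul_of_nonneg_right h1 (Real.exp_pos (-(2*K)*s)).le
      rwa [← Real.exp_add, show 2*K*s + -(2*K)*s = 0 by ring, Real.exp_zero] at this
    calc u s ≤ Real.exp 0 := Real.exp_le_exp.mpr (by linarith)
    _ = 1 := Real.exp_zero
  have hu0 : u 0 = Real.exp (1 - b) := by simp [hu_def]
  have humono : ∀ s, 0 ≤ s → Real.exp (1 - b) ≤ u s := by
    intro s hs
    apply Real.exp_le_exp.mpr
    have : Real.exp (-(2*K)*s) ≤ 1 := Real.exp_le_one_iff.mpr (by nlinarith)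
    nlinarith
  have hud : ∀ s : ℝ, HasDerivAt u (2*K * gOs (u s)) s := by
    intro s
    have h1 : HasDerivAt (fun s : ℝ => -(2*K)*s) (-(2*K)) s := by
      simpa using (hasDerivAt_id s).const_mul (-(2*K))
    have h2 : HasDerivAt (fun s : ℝ => 1 - b * Real.exp (-(2*K)*s))
        (-(b * (Real.exp (-(2*K)*s) * -(2*K)))) s := (h1.exp.const_mul b).const_sub 1
    have h3 := h2.exp
    have hlog : Real.log (u s) = 1 - b * Real.exp (-(2*K)*s) := Real.log_exp _
    convert h3 using 1
    unfold u
    rw [show gOs (Real.exp (1 - b * Real.exp (-(2*K)*s)))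
        = Real.exp (1 - b * Real.exp (-(2*K)*s)) * (b * Real.exp (-(2*K)*s)) by
      unfold gOs; rw [Real.log_exp]; ring]
    ring
  have hgu_cont : Continuous (fun s => gOs (u s)) := gOs_cont.comp hucont
  have hint_u : ∀ r : ℝ, r ∈ Set.Icc (0:ℝ) T → K * (∫ τ in (0:ℝ)..r, gOs (u τ)) ≤ u r - Real.exp (1 - b) := by
    intro r hrm
    have hr : 0 ≤ r := hrm.1
    have heq : (∫ τ in (0:ℝ)..r, 2*K * gOs (u τ)) = u r - u 0 :=
      intervalIntegral.integral_eq_sub_of_hasDerivAt (fun x _ => hud x)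
        ((continuous_const.mul hgu_cont).intervalIntegrable 0 r)
    rw [intervalIntegral.integral_const_mul] at heq
    have hnn : 0 ≤ ∫ τ in (0:ℝ)..r, gOs (u τ) := by
      apply intervalIntegral.integral_nonneg hr
      intro x hx
      exact gOs_nonneg ⟨(hupos x).le, hule1 x ⟨hx.1, hx.2.trans hrm.2⟩⟩
    nlinarith [hu0, humono r hr]
  -- main contradiction argument
  by_contra hcon
  push_neg at hcon
  set S : Set ℝ := Set.Icc 0 T ∩ {s | 0 ≤ wt s - u s} with hS_def
  have hSne : S.Nonempty := ⟨t₀, Set.mem_inter ht₀ (Set.mem_setOf_eq ▸ sub_nonneg.mpr hcon)⟩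
  have hSclosed : IsClosed S :=
    ContinuousOn.preimage_isClosed_of_isClosed
      (hwtc.sub hucont.continuousOn) isClosed_Icc isClosed_Ici
  have hSbdd : BddBelow S := ⟨0, fun x hx => hx.1.1⟩
  set ts := sInf S with hts_def
  have htsS : ts ∈ S := hSclosed.csInf_mem hSne hSbdd
  have htsIcc : ts ∈ Set.Icc (0:ℝ) T := htsS.1
  have hwt0 : wt 0 = 0 := by
    have h0 : (0:ℝ) ∈ Set.Icc (0:ℝ) T := ⟨le_refl 0, hT⟩
    have := h 0 h0
    simp only [intervalIntegral.integral_same, mul_zero] at this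
    exact le_antisymm this (hwt01 0 h0).1
  have hts_pos : 0 < ts := by
    rcases htsIcc.1.eq_or_lt with h0 | h0
    · exfalso
      have h2 := htsS.2
      rw [← h0] at h2
      simp only [Set.mem_setOf_eq, hwt0] at h2
      linarith [hupos (0:ℝ)]
    · exact h0
  have hlt : ∀ s, 0 ≤ s → s < ts → wt s < u s := by
    intro s hs0 hsts
    by_contra hns
    push_neg at hns
    have hsS : s ∈ S := ⟨⟨hs0, hsts.le.trans htsIcc.2⟩, sub_nonneg.mpr hns⟩
    exact absurd (csInf_le hSbdd hsS) (not_le.mpr hsts)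
  -- on [0, ts), wt r ≤ u r - exp(1-b)
  have hchain : ∀ r ∈ Set.Ico (0:ℝ) ts, wt r - u r ≤ -Real.exp (1 - b) := by
    intro r hr
    have hrIcc : r ∈ Set.Icc (0:ℝ) T := ⟨hr.1, hr.2.le.trans htsIcc.2⟩
    have h1 : wt r ≤ K * ∫ τ in (0:ℝ)..r, gOs (wt τ) := h r hrIcc
    have hmono : (∫ τ in (0:ℝ)..r, gOs (wt τ)) ≤ ∫ τ in (0:ℝ)..r, gOs (u τ) := by
      apply intervalIntegral.integral_mono_on hr.1
      · have hci : ContinuousOn (fun τ => gOs (wt τ)) (Set.uIcc 0 r) := by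
          rw [Set.uIcc_of_le hr.1]
          exact gOs_cont.comp_continuousOn (hwtc.mono (Set.Icc_subset_Icc le_rfl hrIcc.2))
        exact hci.intervalIntegrable
      · exact (hgu_cont.intervalIntegrable 0 r)
      · intro x hx
        have hxIcc : x ∈ Set.Icc (0:ℝ) T := ⟨hx.1, hx.2.trans hrIcc.2⟩
        have hxlt : wt x < u x := hlt x hx.1 (lt_of_le_of_lt hx.2 hr.2)
        exact gOs_mono (hwt01 x hxIcc) ⟨(hupos x).le, hule1 x hxIcc⟩ hxlt.le
    have h2 := hint_u r hrIcc
    have hK' : 0 ≤ K := hK.le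
    nlinarith
  -- pass to the limit r → ts⁻
  have hφc : ContinuousWithinAt (fun s => wt s - u s) (Set.Icc 0 T) ts :=
    (hwtc.sub hucont.continuousOn) ts htsIcc
  have hsub : Set.Ico (0:ℝ) ts ⊆ Set.Icc (0:ℝ) T :=
    fun x hx => ⟨hx.1, hx.2.le.trans htsIcc.2⟩
  have htend : Filter.Tendsto (fun s => wt s - u s) (nhdsWithin ts (Set.Ico 0 ts))
      (nhds (wt ts - u ts)) := hφc.mono hsub
  have hNB : (nhdsWithin ts (Set.Ico 0 ts)).NeBot := by
    rw [← mem_closure_iff_nhdsWithin_neBot, closure_Ico hts_pos.ne]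
    exact ⟨hts_pos.le, le_rfl⟩
  have hlim : wt ts - u ts ≤ -Real.exp (1 - b) :=
    le_of_tendsto htend (Filter.eventually_of_mem self_mem_nhdsWithin hchain)
  have := htsS.2
  simp only [Set.mem_setOf_eq] at this
  nlinarith [Real.exp_pos (1 - b)]



/-- Convergence step (Osgood-type, with forcing `2^{-n}` removed in the limit): given
`[0,1]`-valued continuous `w_n` satisfying the recursive integral inequality, any continuous
`w̃ : [0,T] → [0,1]` satisfying the limiting inequality
`w̃(t) ≤ CM ∫₀ᵗ w̃(τ) ln(e + M/w̃(τ)) dτ` vanishes identically on `[0,T]`.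
(Here `Real.log` and division by zero make the integrand `0` where the function vanishes.) -/
theorem limsup_osgood_vanishing (C M T : ℝ) (hC : 0 < C) (hM : 1 ≤ M)
    (w : ℕ → ℝ → ℝ)
    (hwc : ∀ n, ContinuousOn (w n) (Set.Icc 0 T))
    (hw01 : ∀ n, ∀ t ∈ Set.Icc (0 : ℝ) T, w n t ∈ Set.Icc (0 : ℝ) 1)
    (hrec : ∀ n, ∀ t ∈ Set.Icc (0 : ℝ) T,
      w (n + 1) t ≤ C * M * ((2 : ℝ) ^ (-(n : ℝ))
        + ∫ τ in (0 : ℝ)..t, w n τ * Real.log (Real.exp 1 + M / w n τ)))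
    (wt : ℝ → ℝ)
    (hwtc : ContinuousOn wt (Set.Icc 0 T))
    (hwt01 : ∀ t ∈ Set.Icc (0 : ℝ) T, wt t ∈ Set.Icc (0 : ℝ) 1)
    (hwt : ∀ t ∈ Set.Icc (0 : ℝ) T,
      wt t ≤ C * M * ∫ τ in (0 : ℝ)..t, wt τ * Real.log (Real.exp 1 + M / wt τ)) :
    ∀ t ∈ Set.Icc (0 : ℝ) T, wt t = 0 := by
  intro t ht
  have hM0 : (0:ℝ) < M := lt_of_lt_of_le one_pos hM
  set L : ℝ := Real.log (Real.exp 1 + M) with hL_def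
  have hL1 : 1 ≤ L := by
    calc (1:ℝ) = Real.log (Real.exp 1) := (Real.log_exp 1).symm
    _ ≤ L := Real.log_le_log (Real.exp_pos 1) (by linarith)
  set K : ℝ := C * M * L with hK_def
  have hKpos : 0 < K := mul_pos (mul_pos hC hM0) (lt_of_lt_of_le one_pos hL1)
  have hCM : (0:ℝ) ≤ C * M := by positivity
  -- reduction to the gOs inequality
  have hred : ∀ r ∈ Set.Icc (0:ℝ) T, wt r ≤ K * ∫ τ in (0:ℝ)..r, gOs (wt τ) := by
    intro r hr
    have h1 := hwt r hr
    have hgw_cont : ContinuousOn (fun τ => gOs (wt τ)) (Set.uIcc 0 r) := by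
      rw [Set.uIcc_of_le hr.1]
      exact gOs_cont.comp_continuousOn (hwtc.mono (Set.Icc_subset_Icc le_rfl hr.2))
    have hg_nn : 0 ≤ ∫ τ in (0:ℝ)..r, gOs (wt τ) := by
      apply intervalIntegral.integral_nonneg hr.1
      intro x hx
      exact gOs_nonneg (hwt01 x ⟨hx.1, hx.2.trans hr.2⟩)
    by_cases hInt : IntervalIntegrable
        (fun τ => wt τ * Real.log (Real.exp 1 + M / wt τ)) MeasureTheory.volume 0 r
    · have hmono : (∫ τ in (0:ℝ)..r, wt τ * Real.log (Real.exp 1 + M / wt τ))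
          ≤ ∫ τ in (0:ℝ)..r, L * gOs (wt τ) := by
        apply intervalIntegral.integral_mono_on hr.1 hInt
          ((hgw_cont.const_smul L).intervalIntegrable)
        intro x hx
        exact integrand_le hM (hwt01 x ⟨hx.1, hx.2.trans hr.2⟩)
      rw [intervalIntegral.integral_const_mul] at hmono
      calc wt r ≤ C * M * ∫ τ in (0:ℝ)..r, wt τ * Real.log (Real.exp 1 + M / wt τ) := h1
      _ ≤ C * M * (L * ∫ τ in (0:ℝ)..r, gOs (wt τ)) := mul_le_mul_of_nonneg_left hmono hCM
      _ = K * ∫ τ in (0:ℝ)..r, gOs (wt τ) := by rw [hK_def]; ring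
    · rw [intervalIntegral.integral_undef hInt, mul_zero] at h1
      exact h1.trans (by positivity)
  -- conclude wt t = 0 by comparison with supersolutions
  rcases ((hwt01 t ht).1).eq_or_lt with h0 | h0
  · exact h0.symm
  exfalso
  set δ := wt t with hδ_def
  have hδ1 : δ ≤ 1 := (hwt01 t ht).2
  have hlogδ : Real.log δ ≤ 0 := Real.log_nonpos h0.le hδ1
  set b : ℝ := (1 - Real.log δ) * Real.exp (2*K*T) with hb_def
  have hbge : Real.exp (2*K*T) ≤ b :=
    le_mul_of_one_le_left (Real.exp_pos _).le (by linarith)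
  have hcomp := osgood_compare K T hKpos wt hwtc hwt01 hred b hbge t ht
  have hexp1 : (1:ℝ) ≤ Real.exp (2*K*T + -(2*K)*t) :=
    Real.one_le_exp (by nlinarith [ht.2])
  have hbb : 1 - Real.log δ ≤ b * Real.exp (-(2*K)*t) := by
    rw [hb_def, mul_assoc, ← Real.exp_add]
    nlinarith
  have : Real.exp (1 - b * Real.exp (-(2*K)*t)) ≤ δ := by
    calc Real.exp (1 - b * Real.exp (-(2*K)*t)) ≤ Real.exp (Real.log δ) :=
      Real.exp_le_exp.mpr (by linarith)
    _ = δ := Real.exp_log h0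
  linarith
end
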